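/- Let N ≥ 2, β ∈ (0, N), g(x) ≥ c₂|x|^{-β} for |x| ≥ R₁ with c₂, R₁ > 0, d > 0, z(t) = (t,0,…,0), and R(t) > 0 defined by ∫_{B_{R(t)}(z(t))} g dx = d. Then R(t)/t → 0 as t → +∞, and consequently t - R(t) → +∞. -/

import Mathlib

/-!
Put `r = min (R t) (t / 2)`. On `B_r(z t)` one has `t / 2 ≤ |x| ≤ 2t`, so for large `t` the
lower bound on `g` gives `g ≥ c₂ (2t)^{-β}` there, and comparing with the mass `d` yields
`c₂ (2t)^{-β} |B_1| r^N ≤ d`. Hence `(r / t)^N = O(t^{β - N}) → 0`; in particular `r < t / 2`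
eventually, so `r = R t` and `R t / t → 0`.
-/

open MeasureTheory Filter Topology Metric Module

section Asymptotics

variable {α : Type*} {l : Filter α} {u : α → ℝ}

lemma tendsto_nhds_zero_of_tendsto_pow {n : ℕ} (hn : n ≠ 0) (hu : ∀ᶠ x in l, 0 ≤ u x)
    (h : Tendsto (fun x => u x ^ n) l (𝓝 0)) : Tendsto u l (𝓝 0) := by
  have hroot := h.rpow_const (p := (n : ℝ)⁻¹) (Or.inr (by positivity))
  rw [Real.zero_rpow (by positivity)] at hroot
  refine hroot.congr' ?_
  filter_upwards [hu] with x hx using Real.pow_rpow_inv_natCast hx hn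

lemma tendsto_nhds_zero_of_tendsto_min {c : ℝ} (hc : 0 < c)
    (h : Tendsto (fun x => min (u x) c) l (𝓝 0)) : Tendsto u l (𝓝 0) := by
  refine h.congr' ?_
  filter_upwards [h.eventually_lt_const hc] with x hx
  exact min_eq_left ((min_lt_iff.1 hx).resolve_right (lt_irrefl c)).le

lemma tendsto_sub_atTop_of_tendsto_div {f : ℝ → ℝ}
    (h : Tendsto (fun t => f t / t) atTop (𝓝 0)) :
    Tendsto (fun t => t - f t) atTop atTop := by
  have hfactor : Tendsto (fun t => 1 - f t / t) atTop (𝓝 1) := by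
    simpa using tendsto_const_nhds.sub h
  refine (tendsto_id.atTop_mul_pos one_pos hfactor).congr' ?_
  filter_upwards [eventually_ne_atTop 0] with t ht
  change t * (1 - f t / t) = t - f t
  field_simp

end Asymptotics

section Geometry

variable {E : Type*} [NormedAddCommGroup E]

lemma norm_mem_Icc_of_mem_ball {z x : E} {r : ℝ} (hr : r ≤ ‖z‖ / 2) (hx : x ∈ ball z r) :
    ‖x‖ ∈ Set.Icc (‖z‖ / 2) (2 * ‖z‖) := by
  rw [mem_ball_iff_norm] at hx
  have hdiff := abs_le.1 ((abs_norm_sub_norm_le x z).trans hx.le)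
  constructor <;> linarith [norm_nonneg z]

lemma mul_rpow_neg_le_of_mem_ball {g : E → ℝ} {β R₁ c : ℝ} (hβ : 0 ≤ β) (hc : 0 ≤ c)
    (hg : ∀ x, R₁ ≤ ‖x‖ → c * ‖x‖ ^ (-β) ≤ g x) {z x : E} {r : ℝ} (hz : 2 * R₁ ≤ ‖z‖)
    (hz0 : 0 < ‖z‖) (hr : r ≤ ‖z‖ / 2) (hx : x ∈ ball z r) :
    c * (2 * ‖z‖) ^ (-β) ≤ g x := by
  obtain ⟨hlow, hup⟩ := norm_mem_Icc_of_mem_ball hr hx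
  calc c * (2 * ‖z‖) ^ (-β) ≤ c * ‖x‖ ^ (-β) :=
        mul_le_mul_of_nonneg_left
          (Real.rpow_le_rpow_of_nonpos (by linarith) hup (neg_nonpos.2 hβ)) hc
    _ ≤ g x := hg x (by linarith)

variable [NormedSpace ℝ E] [FiniteDimensional ℝ E] [Nontrivial E] [MeasurableSpace E]
  [BorelSpace E] (μ : Measure E) [μ.IsAddHaarMeasure]

lemma mul_pow_finrank_mul_measureReal_ball_le_setIntegral {g : E → ℝ} {x : E} {r ρ m : ℝ}
    (hr : 0 ≤ r) (hrρ : r ≤ ρ) (hg : ∀ y ∈ ball x ρ, 0 ≤ g y)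
    (hint : IntegrableOn g (ball x ρ) μ) (hm : ∀ y ∈ ball x r, m ≤ g y) :
    m * (r ^ finrank ℝ E * μ.real (ball 0 1)) ≤ ∫ y in ball x ρ, g y ∂μ := by
  have hsub : ball x r ⊆ ball x ρ := ball_subset_ball hrρ
  calc m * (r ^ finrank ℝ E * μ.real (ball 0 1)) = μ.real (ball x r) • m := by
        rw [smul_eq_mul, measureReal_def μ (ball x r), Measure.addHaar_ball μ x hr,
          ENNReal.toReal_mul, ENNReal.toReal_ofReal (by positivity), ← measureReal_def, mul_comm]
    _ ≤ ∫ y in ball x r, g y ∂μ :=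
        setIntegral_ge_of_const_le measurableSet_ball measure_ball_lt_top.ne hm
          (hint.mono_set hsub)
    _ ≤ ∫ y in ball x ρ, g y ∂μ :=
        setIntegral_mono_set hint (ae_restrict_of_forall_mem measurableSet_ball hg)
          hsub.eventuallyLE

lemma min_pow_finrank_le_of_setIntegral_ball_eq {g : E → ℝ} (hg0 : ∀ x, 0 ≤ g x)
    {β R₁ c d : ℝ} (hβ : 0 ≤ β) (hc : 0 < c) (hgb : ∀ x, R₁ ≤ ‖x‖ → c * ‖x‖ ^ (-β) ≤ g x)
    {z : E} {ρ : ℝ} (hρ : 0 < ρ) (hz : 2 * R₁ ≤ ‖z‖) (hz0 : 0 < ‖z‖)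
    (hint : IntegrableOn g (ball z ρ) μ) (hmass : ∫ x in ball z ρ, g x ∂μ = d) :
    min ρ (‖z‖ / 2) ^ finrank ℝ E ≤ d * 2 ^ β / (c * μ.real (ball 0 1)) * ‖z‖ ^ β := by
  set r := min ρ (‖z‖ / 2)
  have hr : 0 < r := lt_min hρ (by positivity)
  have hv : 0 < μ.real (ball 0 1) :=
    ENNReal.toReal_pos (measure_ball_pos μ 0 one_pos).ne' measure_ball_lt_top.ne
  have hX : 0 < 2 ^ β * ‖z‖ ^ β := by positivity
  have hlower := mul_pow_finrank_mul_measureReal_ball_le_setIntegral μ hr.le (min_le_left _ _)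
    (fun y _ => hg0 y) hint
    (fun y hy => mul_rpow_neg_le_of_mem_ball hβ hc.le hgb hz hz0 (min_le_right _ _) hy)
  rw [hmass, Real.rpow_neg (by positivity), Real.mul_rpow zero_le_two hz0.le, mul_comm c,
    mul_assoc, inv_mul_le_iff₀ hX] at hlower
  rw [div_mul_eq_mul_div, le_div_iff₀ (by positivity)]
  linarith

end Geometry

/-- If `g(x) ≥ c₂|x|^{-β}` for `|x| ≥ R₁` with `β ∈ (0,N)`, and `R(t)` is defined by
`∫_{B_{R(t)}((t,0,…,0))} g = d`, then `R(t)/t → 0` and `t - R(t) → +∞` as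
`t → +∞`. -/
theorem stmt_14 (N : ℕ) (hN : 2 ≤ N)
    (g : EuclideanSpace ℝ (Fin N) → ℝ) (hg0 : ∀ x, 0 < g x)
    (β R₁ c₂ : ℝ) (hβ : β ∈ Set.Ioo (0 : ℝ) (N : ℝ)) (hc₂ : 0 < c₂)
    (hgb : ∀ x : EuclideanSpace ℝ (Fin N), R₁ ≤ ‖x‖ → g x ≥ c₂ * ‖x‖ ^ (-β))
    (d : ℝ) (hd : 0 < d)
    (z : ℝ → EuclideanSpace ℝ (Fin N))
    (hz : ∀ t, z t = EuclideanSpace.single (⟨0, by omega⟩ : Fin N) t)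
    (R : ℝ → ℝ) (hRpos : ∀ t, 0 < t → 0 < R t)
    (hRmeas : ∀ t, 0 < t → (∫ x in Metric.ball (z t) (R t), g x) = d) :
    Tendsto (fun t => R t / t) atTop (𝓝 0) ∧
    Tendsto (fun t => t - R t) atTop atTop := by
  obtain ⟨hβ0, hβN⟩ := hβ
  have : Nonempty (Fin N) := ⟨⟨0, by omega⟩⟩
  set K := d * 2 ^ β / (c₂ * volume.real (ball (0 : EuclideanSpace ℝ (Fin N)) 1))
  have hbound : ∀ᶠ t in atTop, min (R t / t) (1 / 2) ^ N ≤ K * t ^ (β - N) := by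
    filter_upwards [eventually_ge_atTop (2 * R₁), eventually_gt_atTop 0] with t htR ht
    have hzt : ‖z t‖ = t := by rw [hz, PiLp.norm_single, Real.norm_of_nonneg ht.le]
    have hint : IntegrableOn g (ball (z t) (R t)) :=
      Integrable.of_integral_ne_zero (by rw [hRmeas t ht]; exact hd.ne')
    have hmin := min_pow_finrank_le_of_setIntegral_ball_eq volume (fun x => (hg0 x).le)
      hβ0.le hc₂ hgb (hRpos t ht) (by rwa [hzt]) (by rwa [hzt]) hint (hRmeas t ht)
    rw [hzt, finrank_euclideanSpace_fin] at hmin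
    have hscale : min (R t / t) (1 / 2) = min (R t) (t / 2) / t := by
      rw [← min_div_div_right ht.le, div_div_cancel_left' ht.ne', one_div]
    rw [hscale, div_pow, div_le_iff₀ (by positivity), mul_assoc, ← Real.rpow_natCast t N,
      ← Real.rpow_add ht, sub_add_cancel]
    exact hmin
  have hK : Tendsto (fun t : ℝ => K * t ^ (β - N)) atTop (𝓝 0) := by
    simpa [neg_sub] using (tendsto_rpow_neg_atTop (sub_pos.2 hβN)).const_mul K
  have hmin : Tendsto (fun t => min (R t / t) (1 / 2)) atTop (𝓝 0) := by
    have hnonneg : ∀ᶠ t in atTop, 0 ≤ min (R t / t) (1 / 2) := by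
      filter_upwards [eventually_gt_atTop 0] with t ht
      exact le_min (div_pos (hRpos t ht) ht).le one_half_pos.le
    exact tendsto_nhds_zero_of_tendsto_pow (by omega) hnonneg
      (squeeze_zero' (hnonneg.mono fun t ht => pow_nonneg ht N) hbound hK)
  have hdiv := tendsto_nhds_zero_of_tendsto_min one_half_pos hmin
  exact ⟨hdiv, tendsto_sub_atTop_of_tendsto_div hdiv⟩
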